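/- Suppose d = F[m_*]w_* with w_* ∈ W_μ, and m is a stationary point of J̃_α[·; d] (so |m - m_*|r ≤ μ). Then the pair (m, w_α[m; d]) solves the inverse problem with support radius λ for any λ ≥ 2μ and any ε ≥ (8πrμα)²/(1 + (8πrμα)²): namely supp w_α[m;d] ⊆ [-λ, λ] and ‖F[m]w_α[m;d] - d‖ ≤ ε‖d‖. -/

import Mathlib

open MeasureTheory Real Set

/-!
On the support of `d`, the point `t - m r` lies within `|t - m_* r| + |m - m_*| r ≤ 2μ` of
the origin, so there the Tikhonov filter factor `(1 + (4πr)²α²a²)⁻¹` differs from `1` by at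
most `(8πrμα)² / (1 + (8πrμα)²)`; since `F[m] w_α[m;d]` is exactly the filtered `d`, the
residual is pointwise at most `ε |d|`. The support claim is the same triangle inequality for
the shift `(m - m_*) r`.
-/

lemma support_mul_comp_add_subset (f : ℝ → ℝ) {w : ℝ → ℝ} {μ : ℝ}
    (hw : Function.support w ⊆ Icc (-μ) μ) (s : ℝ) :
    Function.support (fun t => f t * w (t + s)) ⊆ Icc (-(μ + |s|)) (μ + |s|) := by
  intro t ht
  have hts : |t + s| ≤ μ := abs_le.mpr (hw (right_ne_zero_of_mul ht))
  have htri : |t| ≤ |t + s| + |s| := by simpa using abs_sub (t + s) s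
  exact abs_le.mp (by linarith)

lemma div_one_add_le_div_one_add {x y : ℝ} (hx : 0 ≤ x) (hxy : x ≤ y) :
    x / (1 + x) ≤ y / (1 + y) := by
  rw [div_le_div_iff₀ (by linarith) (by linarith)]
  nlinarith

lemma sq_inv_one_add_mul_sq_mul_sub_le {κ b B ε : ℝ} (hκ : 0 ≤ κ) (hb : |b| ≤ B)
    (hε : κ * B ^ 2 / (1 + κ * B ^ 2) ≤ ε) (y : ℝ) :
    ((1 + κ * b ^ 2)⁻¹ * y - y) ^ 2 ≤ ε ^ 2 * y ^ 2 := by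
  set x := κ * b ^ 2
  have hx : 0 ≤ x := by positivity
  have hxB : x ≤ κ * B ^ 2 :=
    mul_le_mul_of_nonneg_left (sq_le_sq' (abs_le.mp hb).1 (abs_le.mp hb).2) hκ
  have hratio : x / (1 + x) ≤ ε := (div_one_add_le_div_one_add hx hxB).trans hε
  calc ((1 + x)⁻¹ * y - y) ^ 2 = (x / (1 + x)) ^ 2 * y ^ 2 := by
        field_simp
        ring
    _ ≤ ε ^ 2 * y ^ 2 := by gcongr

lemma abs_min_abs_le_abs {τ : ℝ} (hτ : 0 ≤ τ) (x : ℝ) : |min |x| τ| ≤ |x| := by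
  rw [abs_of_nonneg (le_min (abs_nonneg x) hτ)]
  exact min_le_left _ _

lemma integrable_sq_comp_sub_div {w : ℝ → ℝ} (hw : MemLp w 2 volume) (s c : ℝ) :
    Integrable (fun t => (w (t - s) / c) ^ 2) := by
  simpa only [div_pow] using (hw.integrable_sq.comp_sub_right s).div_const (c ^ 2)

lemma integral_le_const_mul_integral {α : Type*} [MeasurableSpace α] {μ : Measure α}
    {F G : α → ℝ} {c : ℝ} (hG : Integrable G μ) (hF : 0 ≤ᵐ[μ] F)
    (hFG : F ≤ᵐ[μ] fun x => c * G x) :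
    ∫ x, F x ∂μ ≤ c * ∫ x, G x ∂μ := by
  rw [← integral_const_mul]
  exact integral_mono_of_nonneg hF (hG.const_mul c) hFG

theorem stmt_15_general (r mmin mmax tmin tmax α mu lam eps mstar m : ℝ)
    (wstar : ℝ → ℝ)
    (hr : 0 < r)
    (hwstar : MemLp wstar 2 (volume : Measure ℝ))
    (hsupp : Function.support wstar ⊆ Icc (-mu) mu)
    (tau : ℝ)
    (htau : tau = max (max |tmin - mmin * r| |tmin - mmax * r|)
        (max |tmax - mmin * r| |tmax - mmax * r|))
    (a d walpha : ℝ → ℝ)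
    (ha : a = fun t => min |t| tau)
    (hd : d = fun t => wstar (t - mstar * r) / (4 * π * r))
    (hw : walpha = fun t => (1 + (4 * π * r) ^ 2 * α ^ 2 * (a t) ^ 2)⁻¹
        * wstar (t + (m - mstar) * r))
    (hstat : |m - mstar| * r ≤ mu)
    (hlamlo : 2 * mu ≤ lam)
    (heps : (8 * π * r * mu * α) ^ 2 / (1 + (8 * π * r * mu * α) ^ 2) ≤ eps) :
    Function.support walpha ⊆ Icc (-lam) lam ∧
    (∫ t in Icc tmin tmax, (walpha (t - m * r) / (4 * π * r) - d t) ^ 2)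
      ≤ eps ^ 2 * ∫ t in Icc tmin tmax, (d t) ^ 2 := by
  have hshift : |(m - mstar) * r| ≤ mu := by rwa [abs_mul, abs_of_pos hr]
  have htau0 : 0 ≤ tau :=
    htau ▸ (abs_nonneg _).trans ((le_max_left _ _).trans (le_max_left _ _))
  subst hw
  refine ⟨(support_mul_comp_add_subset _ hsupp _).trans
    (Icc_subset_Icc (by linarith) (by linarith)), ?_⟩
  have hpoint (t : ℝ) :
      ((1 + (4 * π * r) ^ 2 * α ^ 2 * a (t - m * r) ^ 2)⁻¹
        * wstar (t - m * r + (m - mstar) * r) / (4 * π * r) - d t) ^ 2 ≤ eps ^ 2 * d t ^ 2 := by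
    have hshifted : t - m * r + (m - mstar) * r = t - mstar * r := by ring
    rw [hshifted, mul_div_assoc, show wstar (t - mstar * r) / (4 * π * r) = d t by rw [hd]]
    rcases eq_or_ne (wstar (t - mstar * r)) 0 with hzero | hne
    · simp [hd, hzero]
    have hnear : |t - m * r| ≤ 2 * mu := by
      have hsrc : |t - mstar * r| ≤ mu := abs_le.mpr (hsupp hne)
      have htri := abs_sub (t - mstar * r) ((m - mstar) * r)
      rw [show t - mstar * r - (m - mstar) * r = t - m * r by ring] at htri
      linarith
    have hdamp : |a (t - m * r)| ≤ |t - m * r| := by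
      rw [ha]
      exact abs_min_abs_le_abs htau0 _
    refine sq_inv_one_add_mul_sq_mul_sub_le (by positivity) (hdamp.trans hnear) ?_ _
    convert heps using 2 <;> ring
  refine integral_le_const_mul_integral ?_ (ae_of_all _ fun t => sq_nonneg _) (ae_of_all _ hpoint)
  exact hd ▸ (integrable_sq_comp_sub_div hwstar _ _).restrict

/-- For noise-free data `d = F[m_*]w_*`, `w_* ∈ W_μ`, and a
stationary point `m` of `J̃_α[·;d]` (so `|m - m_*| r ≤ μ`), the pair
`(m, w_α[m;d])` solves the inverse problem with support radius `λ` for any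
`λ ≥ 2μ` and any `ε ≥ (8πrμα)²/(1 + (8πrμα)²)`: namely
`supp w_α[m;d] ⊆ [-λ, λ]` and `‖F[m]w_α[m;d] - d‖ ≤ ε‖d‖`. -/
theorem stmt_15 (r mmin mmax lammax tmin tmax α mu lam eps mstar m : ℝ)
    (wstar : ℝ → ℝ)
    (hr : 0 < r) (hmmin : 0 < mmin) (hmm : mmin ≤ mmax) (hlammax : 0 < lammax)
    (ht : tmin < tmax) (hα : 0 < α)
    (hmu : 0 < mu) (hmu' : 2 * mu ≤ lammax)
    (hmstar : mstar ∈ Ioo mmin mmax) (hm : m ∈ Ioo mmin mmax)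
    (hwstar : MemLp wstar 2 (volume : Measure ℝ))
    (hsupp : Function.support wstar ⊆ Icc (-mu) mu)
    (hcont : Icc (mmin * r - lammax) (mmax * r + lammax) ⊆ Icc tmin tmax)
    (tau : ℝ)
    (htau : tau = max (max |tmin - mmin * r| |tmin - mmax * r|)
        (max |tmax - mmin * r| |tmax - mmax * r|))
    (a d walpha : ℝ → ℝ)
    (ha : a = fun t => min |t| tau)
    (hd : d = fun t => wstar (t - mstar * r) / (4 * π * r))
    (hw : walpha = fun t => (1 + (4 * π * r) ^ 2 * α ^ 2 * (a t) ^ 2)⁻¹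
        * wstar (t + (m - mstar) * r))
    (hstat : |m - mstar| * r ≤ mu)
    (hlamlo : 2 * mu ≤ lam) (hlamhi : lam ≤ lammax)
    (heps : (8 * π * r * mu * α) ^ 2 / (1 + (8 * π * r * mu * α) ^ 2) ≤ eps) :
    Function.support walpha ⊆ Icc (-lam) lam ∧
    (∫ t in Icc tmin tmax, (walpha (t - m * r) / (4 * π * r) - d t) ^ 2)
      ≤ eps ^ 2 * ∫ t in Icc tmin tmax, (d t) ^ 2 :=
  stmt_15_general r mmin mmax tmin tmax α mu lam eps mstar m wstar hr hwstar hsupp tau htau a d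
    walpha ha hd hw hstat hlamlo heps
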